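/- arXiv:0801.4384 — 3 statements merged into one kernel-verified Lean document; each statement's English description precedes it below -/
import Mathlib

section
/- If A is quasi-positive, A ≤ B entrywise, and A ≠ B, then for every t > 0 we have 0 ≤ e^{tA} ≤ e^{tB} entrywise and e^{tA} ≠ e^{tB}. -/
open Matrix

/-- The matrix exponential over the reals. -/
noncomputable def mexp {n : ℕ} (A : Matrix (Fin n) (Fin n) ℝ) : Matrix (Fin n) (Fin n) ℝ :=
  NormedSpace.exp A

/-- Spectral radius of a real matrix: largest modulus of its (complex) eigenvalues. -/
noncomputable def specRad {n : ℕ} (A : Matrix (Fin n) (Fin n) ℝ) : ENNReal :=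
  spectralRadius ℂ (A.map (Complex.ofReal))

/-- The matrix `A(e)` of the within-host HIV model with RT-inhibitor efficiency `e`. -/
noncomputable def Amat (β γ k T₀ N : ℝ) (e : ℝ) : Matrix (Fin 2) (Fin 2) ℝ :=
  !![-β, k * (1 - e) * T₀; N * β, -γ]

/-- The monodromy matrix `Φ(e,p)` for bang-bang periodic treatment. -/
noncomputable def Phi (β γ k T₀ N τ : ℝ) (e p : ℝ) : Matrix (Fin 2) (Fin 2) ℝ :=
  mexp ((τ - p) • Amat β γ k T₀ N 0) * mexp (p • Amat β γ k T₀ N e)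

/-!
Shifting by a multiple of the identity commutes with everything, so
`e^{tA} = e^{-tr} e^{t(A + r I)}`, and for `r` large `A + r I` is entrywise nonnegative. For
nonnegative matrices the exponential series `∑ Mᵏ / k!` is monotone term by term, and the
linear term `M` already makes an entry where `A < B` strictly larger.
-/

namespace Matrix

variable {ι : Type*}

def IsQuasiPositive (A : Matrix ι ι ℝ) : Prop :=
  ∀ i j, i ≠ j → 0 ≤ A i j

theorem IsQuasiPositive.smul {A : Matrix ι ι ℝ} (hA : A.IsQuasiPositive) {t : ℝ} (ht : 0 ≤ t) :
    (t • A).IsQuasiPositive :=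
  fun i j hij => mul_nonneg ht (hA i j hij)

variable [Fintype ι] [DecidableEq ι]

theorem IsQuasiPositive.exists_nonneg_add_smul_one {A : Matrix ι ι ℝ} (hA : A.IsQuasiPositive) :
    ∃ r : ℝ, ∀ i j, 0 ≤ (A + r • 1) i j := by
  refine ⟨∑ k, |A k k|, fun i j => ?_⟩
  rcases eq_or_ne i j with rfl | hij
  · have hle : |A i i| ≤ ∑ k, |A k k| :=
      Finset.single_le_sum (fun k _ => abs_nonneg (A k k)) (Finset.mem_univ i)
    simp only [add_apply, smul_apply, one_apply_eq, smul_eq_mul, mul_one]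
    linarith [neg_abs_le (A i i)]
  · simpa [one_apply_ne hij] using hA i j hij

section Pow

variable {R : Type*} [Semiring R] [PartialOrder R] [IsOrderedRing R]

theorem pow_apply_le_pow_apply {M N : Matrix ι ι R} (hM : ∀ i j, 0 ≤ M i j)
    (hMN : ∀ i j, M i j ≤ N i j) (k : ℕ) (i j : ι) : (M ^ k) i j ≤ (N ^ k) i j := by
  have hN : ∀ i j, 0 ≤ N i j := fun i j => (hM i j).trans (hMN i j)
  induction k generalizing j with
  | zero => rfl
  | succ k ih =>
    rw [pow_succ, pow_succ, mul_apply, mul_apply]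
    exact Finset.sum_le_sum fun l _ =>
      mul_le_mul (ih l) (hMN l j) (hM l j) (pow_apply_nonneg hN k i l)

end Pow

section Exp

open NormedSpace Nat

theorem hasSum_exp_apply (M : Matrix ι ι ℝ) (i j : ι) :
    HasSum (fun k => (k ! : ℝ)⁻¹ * (M ^ k) i j) (exp M i j) := by
  -- `exp` only sees the topology, so any normed-algebra structure on matrices will do.
  let := Matrix.linftyOpNormedRing (n := ι) (α := ℝ)
  let := Matrix.linftyOpNormedAlgebra (n := ι) (R := ℝ) (α := ℝ)
  exact Pi.hasSum.mp (Pi.hasSum.mp (exp_series_hasSum_exp' (𝕂 := ℝ) M) i) j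

theorem exp_apply_nonneg {M : Matrix ι ι ℝ} (hM : ∀ i j, 0 ≤ M i j) (i j : ι) :
    0 ≤ exp M i j :=
  (hasSum_exp_apply M i j).nonneg fun k => mul_nonneg (by positivity) (pow_apply_nonneg hM k i j)

theorem exp_apply_le_exp_apply {M N : Matrix ι ι ℝ} (hM : ∀ i j, 0 ≤ M i j)
    (hMN : ∀ i j, M i j ≤ N i j) (i j : ι) : exp M i j ≤ exp N i j :=
  hasSum_le (fun k => mul_le_mul_of_nonneg_left (pow_apply_le_pow_apply hM hMN k i j)
    (by positivity)) (hasSum_exp_apply M i j) (hasSum_exp_apply N i j)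

theorem exp_apply_lt_exp_apply {M N : Matrix ι ι ℝ} (hM : ∀ i j, 0 ≤ M i j)
    (hMN : ∀ i j, M i j ≤ N i j) {i j : ι} (hlt : M i j < N i j) : exp M i j < exp N i j :=
  hasSum_lt (i := 1)
    (fun k => mul_le_mul_of_nonneg_left (pow_apply_le_pow_apply hM hMN k i j) (by positivity))
    (by simpa using hlt) (hasSum_exp_apply M i j) (hasSum_exp_apply N i j)

theorem exp_eq_exp_neg_smul_exp_add_smul_one (X : Matrix ι ι ℝ) (r : ℝ) :
    exp X = Real.exp (-r) • exp (X + r • 1) := by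
  have hscalar : exp (r • 1 : Matrix ι ι ℝ) = Real.exp r • 1 := by
    rw [smul_one_eq_diagonal, smul_one_eq_diagonal, exp_diagonal, Pi.exp_def, Real.exp_eq_exp_ℝ]
  rw [exp_add_of_commute _ _ ((Commute.one_right X).smul_right r), hscalar, mul_smul_comm,
    mul_one, smul_smul, ← Real.exp_add, neg_add_cancel, Real.exp_zero, one_smul]

theorem IsQuasiPositive.exp_apply_nonneg {A : Matrix ι ι ℝ} (hA : A.IsQuasiPositive)
    (i j : ι) : 0 ≤ exp A i j := by
  obtain ⟨r, hr⟩ := hA.exists_nonneg_add_smul_one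
  rw [exp_eq_exp_neg_smul_exp_add_smul_one A r, smul_apply, smul_eq_mul]
  exact mul_nonneg (Real.exp_pos _).le (Matrix.exp_apply_nonneg hr i j)

theorem IsQuasiPositive.exp_apply_le_exp_apply {A B : Matrix ι ι ℝ} (hA : A.IsQuasiPositive)
    (hAB : ∀ i j, A i j ≤ B i j) (i j : ι) : exp A i j ≤ exp B i j := by
  obtain ⟨r, hr⟩ := hA.exists_nonneg_add_smul_one
  rw [exp_eq_exp_neg_smul_exp_add_smul_one A r, exp_eq_exp_neg_smul_exp_add_smul_one B r,
    smul_apply, smul_apply, smul_eq_mul, smul_eq_mul]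
  exact mul_le_mul_of_nonneg_left
    (Matrix.exp_apply_le_exp_apply hr (fun i j => add_le_add (hAB i j) le_rfl) i j)
    (Real.exp_pos _).le

theorem IsQuasiPositive.exp_apply_lt_exp_apply {A B : Matrix ι ι ℝ} (hA : A.IsQuasiPositive)
    (hAB : ∀ i j, A i j ≤ B i j) {i j : ι} (hlt : A i j < B i j) : exp A i j < exp B i j := by
  obtain ⟨r, hr⟩ := hA.exists_nonneg_add_smul_one
  rw [exp_eq_exp_neg_smul_exp_add_smul_one A r, exp_eq_exp_neg_smul_exp_add_smul_one B r,
    smul_apply, smul_apply, smul_eq_mul, smul_eq_mul]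
  exact mul_lt_mul_of_pos_left
    (Matrix.exp_apply_lt_exp_apply hr (fun i j => add_le_add (hAB i j) le_rfl)
      (add_lt_add_of_lt_of_le hlt le_rfl))
    (Real.exp_pos _)

end Exp

end Matrix

/-- If `A` is quasi-positive, `A ≤ B` entrywise and `A ≠ B`, then for every `t > 0`
we have `0 ≤ e^{tA} ≤ e^{tB}` entrywise and `e^{tA} ≠ e^{tB}`. -/
theorem exp_mono_of_quasipositive {n : ℕ} (A B : Matrix (Fin n) (Fin n) ℝ)
    (hA : ∀ i j, i ≠ j → 0 ≤ A i j) (hAB : ∀ i j, A i j ≤ B i j) (hne : A ≠ B) :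
    ∀ t : ℝ, 0 < t →
      (∀ i j, 0 ≤ mexp (t • A) i j) ∧ (∀ i j, mexp (t • A) i j ≤ mexp (t • B) i j) ∧
        mexp (t • A) ≠ mexp (t • B) := by
  intro t ht
  have htA : (t • A).IsQuasiPositive := IsQuasiPositive.smul hA ht.le
  have htAB : ∀ i j, (t • A) i j ≤ (t • B) i j := fun i j =>
    mul_le_mul_of_nonneg_left (hAB i j) ht.le
  obtain ⟨i, j, hlt⟩ : ∃ i j, A i j < B i j := by
    by_contra! h
    exact hne (ext fun i j => (hAB i j).antisymm (h i j))
  refine ⟨htA.exp_apply_nonneg, htA.exp_apply_le_exp_apply htAB, fun heq => ?_⟩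
  exact (htA.exp_apply_lt_exp_apply htAB (mul_lt_mul_of_pos_left hlt ht)).ne
    (congrFun₂ heq i j)
end

section
/- Define Φ(e,p) = e^{(τ-p)A(0)} e^{pA(e)} with A(e) = [[-β, k(1-e)T₀],[Nβ, -γ]]. For e ∈ (0,1] and 0 ≤ p < p' ≤ τ, the spectral radius satisfies ρ(Φ(e,p')) < ρ(Φ(e,p)). -/
/-!
For a `2 × 2` matrix with nonnegative entries the eigenvalues are real and
`ρ = (tr + √(tr² - 4 det)) / 2`, which at fixed determinant increases strictly with the trace.
Along `p ↦ Φ(e,p)` the determinant is constant: by Jacobi's formula its derivative is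
`det Φ · tr (A(e) - A(0)) = 0`. The trace strictly decreases: its derivative is
`tr ((A(e) - A(0)) e^{pA(e)} e^{(τ-p)A(0)}) = -k e T₀ (e^{pA(e)} e^{(τ-p)A(0)})₁₀ < 0`, the entry
being positive because exponentials of Metzler matrices are entrywise nonnegative with positive
diagonal, and positive wherever the matrix itself is.
-/

open Matrix

namespace Matrix

variable {n : ℕ}

lemma mul_apply_nonneg {X Y : Matrix (Fin n) (Fin n) ℝ} (hX : ∀ i j, 0 ≤ X i j)
    (hY : ∀ i j, 0 ≤ Y i j) (i j : Fin n) : 0 ≤ (X * Y) i j := by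
  rw [mul_apply]
  exact Finset.sum_nonneg fun l _ => mul_nonneg (hX i l) (hY l j)

lemma mul_apply_pos {X Y : Matrix (Fin n) (Fin n) ℝ} (hX : ∀ i j, 0 ≤ X i j)
    (hY : ∀ i j, 0 ≤ Y i j) {i l j : Fin n} (hXil : 0 < X i l) (hYlj : 0 < Y l j) :
    0 < (X * Y) i j := by
  rw [mul_apply]
  exact Finset.sum_pos' (fun m _ => mul_nonneg (hX i m) (hY m j))
    ⟨l, Finset.mem_univ l, mul_pos hXil hYlj⟩

/-- The paper's quasi-positive matrices. -/
def IsMetzler (A : Matrix (Fin n) (Fin n) ℝ) : Prop :=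
  ∀ i j, i ≠ j → 0 ≤ A i j

lemma IsMetzler.exists_add_smul_one_nonneg {A : Matrix (Fin n) (Fin n) ℝ} (hA : A.IsMetzler) :
    ∃ m : ℝ, ∀ i j, 0 ≤ (A + m • 1) i j := by
  refine ⟨∑ l, |A l l|, fun i j => ?_⟩
  rcases eq_or_ne i j with rfl | hij
  · have : |A i i| ≤ ∑ l, |A l l| :=
      Finset.single_le_sum (f := fun l => |A l l|) (fun _ _ => abs_nonneg _) (Finset.mem_univ i)
    simp only [add_apply, smul_apply, one_apply_eq, smul_eq_mul, mul_one]
    linarith [neg_abs_le (A i i)]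
  · simpa [one_apply_ne hij] using hA i j hij

section Exponential

attribute [local instance] Matrix.linftyOpNormedRing Matrix.linftyOpNormedAlgebra

open NormedSpace

lemma one_add_apply_le_mexp_apply {B : Matrix (Fin n) (Fin n) ℝ} (hB : ∀ i j, 0 ≤ B i j)
    (i j : Fin n) : (1 + B) i j ≤ mexp B i j := by
  have hsum : HasSum (fun k : ℕ => ((k.factorial : ℝ)⁻¹ • B ^ k) i j) (mexp B i j) :=
    Pi.hasSum.1 (Pi.hasSum.1 (exp_series_hasSum_exp' B) i) j
  have hterm : ∀ k, 0 ≤ ((k.factorial : ℝ)⁻¹ • B ^ k) i j := fun k =>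
    mul_nonneg (by positivity) (pow_apply_nonneg hB k i j)
  calc (1 + B) i j = ∑ k ∈ Finset.range 2, ((k.factorial : ℝ)⁻¹ • B ^ k) i j := by
        simp [Finset.sum_range_succ]
    _ ≤ mexp B i j := sum_le_hasSum _ (fun k _ => hterm k) hsum

lemma mexp_smul_eq (A : Matrix (Fin n) (Fin n) ℝ) (t m : ℝ) :
    mexp (t • A) = Real.exp (-(t * m)) • mexp (t • (A + m • 1)) := by
  have hsplit : t • A = (-(t * m)) • (1 : Matrix (Fin n) (Fin n) ℝ) + t • (A + m • 1) := by
    module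
  have hscalar :
      mexp ((-(t * m)) • (1 : Matrix (Fin n) (Fin n) ℝ)) = Real.exp (-(t * m)) • 1 := by
    rw [mexp, ← Algebra.algebraMap_eq_smul_one, ← Algebra.algebraMap_eq_smul_one,
      Real.exp_eq_exp_ℝ]
    exact (algebraMap_exp_comm _).symm
  rw [mexp, hsplit, exp_add_of_commute _ _ ((Commute.one_left _).smul_left _), ← mexp, hscalar,
    smul_one_mul, mexp]

variable {A : Matrix (Fin n) (Fin n) ℝ} {t : ℝ}

/-- `B = t • (A + m • 1)`: the shift by a multiple of the identity commutes with `A`. -/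
lemma IsMetzler.exists_mexp_smul_eq (hA : A.IsMetzler) (ht : 0 ≤ t) :
    ∃ c : ℝ, 0 < c ∧ ∃ B : Matrix (Fin n) (Fin n) ℝ, (∀ i j, 0 ≤ B i j) ∧
      (∀ i j, i ≠ j → B i j = t * A i j) ∧ mexp (t • A) = c • mexp B := by
  obtain ⟨m, hm⟩ := hA.exists_add_smul_one_nonneg
  refine ⟨_, Real.exp_pos (-(t * m)), t • (A + m • 1), fun i j => ?_, fun i j hij => ?_,
    mexp_smul_eq A t m⟩
  · exact mul_nonneg ht (hm i j)
  · simp [one_apply_ne hij]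

lemma IsMetzler.mexp_smul_apply_nonneg (hA : A.IsMetzler) (ht : 0 ≤ t) (i j : Fin n) :
    0 ≤ mexp (t • A) i j := by
  obtain ⟨c, hc, B, hB, -, heq⟩ := hA.exists_mexp_smul_eq ht
  rw [heq, smul_apply, smul_eq_mul]
  have h1B : 0 ≤ (1 + B) i j := by
    rw [add_apply, one_apply]; split_ifs <;> linarith [hB i j]
  exact mul_nonneg hc.le (h1B.trans (one_add_apply_le_mexp_apply hB i j))

lemma IsMetzler.mexp_smul_apply_self_pos (hA : A.IsMetzler) (ht : 0 ≤ t) (i : Fin n) :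
    0 < mexp (t • A) i i := by
  obtain ⟨c, hc, B, hB, -, heq⟩ := hA.exists_mexp_smul_eq ht
  rw [heq, smul_apply, smul_eq_mul]
  have h := one_add_apply_le_mexp_apply hB i i
  rw [add_apply, one_apply_eq] at h
  exact mul_pos hc (by linarith [hB i i])

lemma IsMetzler.mexp_smul_apply_pos (hA : A.IsMetzler) (ht : 0 < t) {i j : Fin n} (hij : i ≠ j)
    (hAij : 0 < A i j) : 0 < mexp (t • A) i j := by
  obtain ⟨c, hc, B, hB, hBA, heq⟩ := hA.exists_mexp_smul_eq ht.le
  rw [heq, smul_apply, smul_eq_mul]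
  have h := one_add_apply_le_mexp_apply hB i j
  rw [add_apply, one_apply_ne hij, zero_add, hBA i j hij] at h
  exact mul_pos hc ((mul_pos ht hAij).trans_le h)

lemma _root_.HasDerivAt.matrix_apply {f : ℝ → Matrix (Fin n) (Fin n) ℝ}
    {f' : Matrix (Fin n) (Fin n) ℝ} {x : ℝ} (hf : HasDerivAt f f' x) (i j : Fin n) :
    HasDerivAt (fun y => f y i j) (f' i j) x :=
  (entryLinearMap ℝ ℝ i j).toContinuousLinearMap.hasFDerivAt.comp_hasDerivAt x hf

lemma _root_.HasDerivAt.matrix_trace {f : ℝ → Matrix (Fin n) (Fin n) ℝ}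
    {f' : Matrix (Fin n) (Fin n) ℝ} {x : ℝ} (hf : HasDerivAt f f' x) :
    HasDerivAt (fun y => (f y).trace) f'.trace x :=
  (traceLinearMap (Fin n) ℝ ℝ).toContinuousLinearMap.hasFDerivAt.comp_hasDerivAt x hf

lemma _root_.HasDerivAt.matrix_det_fin_two {f : ℝ → Matrix (Fin 2) (Fin 2) ℝ}
    {f' : Matrix (Fin 2) (Fin 2) ℝ} {x : ℝ} (hf : HasDerivAt f f' x) :
    HasDerivAt (fun y => (f y).det) (adjugate (f x) * f').trace x := by
  have h := ((hf.matrix_apply 0 0).mul (hf.matrix_apply 1 1)).sub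
    ((hf.matrix_apply 0 1).mul (hf.matrix_apply 1 0))
  simp only [det_fin_two]
  refine h.congr_deriv ?_
  rw [adjugate_fin_two, trace_fin_two]
  simp [mul_apply, Fin.sum_univ_two]
  ring

lemma hasDerivAt_mexp_sub_smul_mul_mexp_smul (A B : Matrix (Fin n) (Fin n) ℝ) (τ x : ℝ) :
    HasDerivAt (fun y => mexp ((τ - y) • A) * mexp (y • B))
      (mexp ((τ - x) • A) * (B - A) * mexp (x • B)) x := by
  have hA : HasDerivAt (fun y => mexp ((τ - y) • A)) (-(mexp ((τ - x) • A) * A)) x := by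
    have h := (hasDerivAt_exp_smul_const A (τ - x)).scomp x ((hasDerivAt_id x).const_sub τ)
    simp only [neg_smul, one_smul] at h
    exact h
  have hB : HasDerivAt (fun y => mexp (y • B)) (B * mexp (x • B)) x :=
    hasDerivAt_exp_smul_const' B x
  exact (hA.mul hB).congr_deriv (by noncomm_ring)

lemma trace_adjugate_mul_mul_mul (X D Y : Matrix (Fin n) (Fin n) ℝ) :
    (adjugate (X * Y) * (X * D * Y)).trace = X.det * Y.det * D.trace := by
  simp only [adjugate_mul_distrib, mul_assoc]
  rw [← mul_assoc X.adjugate X, adjugate_mul, smul_mul_assoc, one_mul, mul_smul_comm,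
    trace_smul, trace_mul_comm Y.adjugate, mul_assoc, mul_adjugate, mul_smul_comm, mul_one,
    trace_smul, smul_eq_mul, smul_eq_mul]

lemma det_mexp_sub_smul_mul_mexp_smul_eq {A B : Matrix (Fin 2) (Fin 2) ℝ}
    (hAB : A.trace = B.trace) (τ x y : ℝ) :
    (mexp ((τ - x) • A) * mexp (x • B)).det = (mexp ((τ - y) • A) * mexp (y • B)).det := by
  have hderiv : ∀ z, HasDerivAt (fun y => (mexp ((τ - y) • A) * mexp (y • B)).det) 0 z := by
    intro z
    refine (hasDerivAt_mexp_sub_smul_mul_mexp_smul A B τ z).matrix_det_fin_two.congr_deriv ?_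
    rw [trace_adjugate_mul_mul_mul, trace_sub, hAB, sub_self, mul_zero]
  exact is_const_of_deriv_eq_zero (fun z => (hderiv z).differentiableAt)
    (fun z => (hderiv z).deriv) x y

end Exponential

lemma spectrum_map_ofReal_fin_two (M : Matrix (Fin 2) (Fin 2) ℝ) {r₁ r₂ : ℝ}
    (hsum : r₁ + r₂ = M.trace) (hprod : r₁ * r₂ = M.det) :
    spectrum ℂ (M.map Complex.ofReal) = {(r₁ : ℂ), (r₂ : ℂ)} := by
  ext z
  have hfactor : z ^ 2 - (M.map Complex.ofReal).trace * z + (M.map Complex.ofReal).det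
      = (z - r₁) * (z - r₂) := by
    have htr : (M.map Complex.ofReal).trace = M.trace := by simp [trace_fin_two]
    have hdet : (M.map Complex.ofReal).det = M.det := by simp [det_fin_two]
    rw [htr, hdet, ← hsum, ← hprod]
    push_cast
    ring
  rw [mem_spectrum_iff_isRoot_charpoly, charpoly_fin_two, Polynomial.IsRoot.def]
  simp [hfactor, sub_eq_zero]

lemma trace_sq_sub_four_mul_det_nonneg (M : Matrix (Fin 2) (Fin 2) ℝ) (h : 0 ≤ M 0 1 * M 1 0) :
    0 ≤ M.trace ^ 2 - 4 * M.det := by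
  rw [trace_fin_two, det_fin_two]
  nlinarith [sq_nonneg (M 0 0 - M 1 1)]

end Matrix

lemma specRad_fin_two (M : Matrix (Fin 2) (Fin 2) ℝ) (htr : 0 ≤ M.trace)
    (hdisc : 0 ≤ M.trace ^ 2 - 4 * M.det) :
    specRad M = ENNReal.ofReal ((M.trace + √(M.trace ^ 2 - 4 * M.det)) / 2) := by
  set s := √(M.trace ^ 2 - 4 * M.det)
  have hs : s ^ 2 = M.trace ^ 2 - 4 * M.det := Real.sq_sqrt hdisc
  have hst : |(M.trace - s) / 2| ≤ (M.trace + s) / 2 := by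
    rw [abs_le]; constructor <;> linarith [Real.sqrt_nonneg (M.trace ^ 2 - 4 * M.det)]
  rw [specRad, spectralRadius, spectrum_map_ofReal_fin_two M (r₁ := (M.trace - s) / 2)
    (r₂ := (M.trace + s) / 2) (by ring) (by linear_combination -hs / 4), iSup_pair]
  simp only [Complex.nnnorm_real, ← enorm_eq_nnnorm, Real.enorm_eq_ofReal_abs]
  rw [abs_of_nonneg ((abs_nonneg _).trans hst)]
  exact sup_eq_right.2 (ENNReal.ofReal_le_ofReal hst)

lemma specRad_lt_specRad_of_trace_lt {M M' : Matrix (Fin 2) (Fin 2) ℝ}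
    (hM : ∀ i j, 0 ≤ M i j) (hM' : ∀ i j, 0 ≤ M' i j) (hdet : M'.det = M.det)
    (htr : M'.trace < M.trace) : specRad M' < specRad M := by
  have htr' : 0 ≤ M'.trace := by rw [trace_fin_two]; linarith [hM' 0 0, hM' 1 1]
  rw [specRad_fin_two M (htr'.trans htr.le)
      (trace_sq_sub_four_mul_det_nonneg M (mul_nonneg (hM 0 1) (hM 1 0))),
    specRad_fin_two M' htr' (trace_sq_sub_four_mul_det_nonneg M' (mul_nonneg (hM' 0 1) (hM' 1 0))),
    hdet, ENNReal.ofReal_lt_ofReal_iff_of_nonneg (by positivity)]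
  have hsqrt : √(M'.trace ^ 2 - 4 * M.det) ≤ √(M.trace ^ 2 - 4 * M.det) :=
    Real.sqrt_le_sqrt (by nlinarith)
  linarith

section Model

variable {β γ k T₀ N : ℝ}

lemma Amat_isMetzler (hβ : 0 ≤ β) (hk : 0 ≤ k) (hT₀ : 0 ≤ T₀) (hN : 0 ≤ N) {e : ℝ}
    (he : e ≤ 1) : (Amat β γ k T₀ N e).IsMetzler := by
  have h1e : 0 ≤ 1 - e := sub_nonneg.2 he
  intro i j hij
  fin_cases i <;> fin_cases j <;> first | exact absurd rfl hij | (simp [Amat]; positivity)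

lemma trace_Amat (e : ℝ) : (Amat β γ k T₀ N e).trace = -β - γ := by
  simp [Amat, trace_fin_two, sub_eq_add_neg]

lemma Amat_sub_Amat_zero (e : ℝ) :
    Amat β γ k T₀ N e - Amat β γ k T₀ N 0 = !![0, -(k * e * T₀); 0, 0] := by
  ext i j
  fin_cases i <;> fin_cases j <;> simp [Amat]
  ring

lemma Phi_apply_nonneg {τ e p : ℝ} (h₀ : (Amat β γ k T₀ N 0).IsMetzler)
    (hₑ : (Amat β γ k T₀ N e).IsMetzler) (hp : 0 ≤ p) (hpτ : p ≤ τ) (i j : Fin 2) :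
    0 ≤ Phi β γ k T₀ N τ e p i j :=
  mul_apply_nonneg (h₀.mexp_smul_apply_nonneg (sub_nonneg.2 hpτ)) (hₑ.mexp_smul_apply_nonneg hp) i j

lemma det_Phi_eq (τ e p p' : ℝ) : (Phi β γ k T₀ N τ e p).det = (Phi β γ k T₀ N τ e p').det :=
  det_mexp_sub_smul_mul_mexp_smul_eq ((trace_Amat 0).trans (trace_Amat e).symm) τ p p'

lemma hasDerivAt_trace_Phi (τ e x : ℝ) :
    HasDerivAt (fun p => (Phi β γ k T₀ N τ e p).trace)
      (-(k * e * T₀) * (mexp (x • Amat β γ k T₀ N e) * mexp ((τ - x) • Amat β γ k T₀ N 0)) 1 0)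
      x := by
  refine (hasDerivAt_mexp_sub_smul_mul_mexp_smul _ _ τ x).matrix_trace.congr_deriv ?_
  rw [Amat_sub_Amat_zero, trace_mul_cycle, trace_mul_comm]
  simp [trace_fin_two, mul_apply, vecMul, dotProduct, Fin.sum_univ_two]

lemma strictAntiOn_trace_Phi (hβ : 0 < β) (hk : 0 < k) (hT₀ : 0 < T₀) (hN : 0 < N) {τ e : ℝ}
    (he0 : 0 < e) (he1 : e ≤ 1) :
    StrictAntiOn (fun p => (Phi β γ k T₀ N τ e p).trace) (Set.Icc 0 τ) := by
  have h₀ := Amat_isMetzler (γ := γ) hβ.le hk.le hT₀.le hN.le zero_le_one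
  have hₑ := Amat_isMetzler (γ := γ) hβ.le hk.le hT₀.le hN.le he1
  refine strictAntiOn_of_deriv_neg (convex_Icc 0 τ)
    (fun x _ => (hasDerivAt_trace_Phi τ e x).continuousAt.continuousWithinAt) fun x hx => ?_
  rw [interior_Icc] at hx
  have hentry : 0 < (mexp (x • Amat β γ k T₀ N e) * mexp ((τ - x) • Amat β γ k T₀ N 0)) 1 0 :=
    mul_apply_pos (hₑ.mexp_smul_apply_nonneg hx.1.le)
      (h₀.mexp_smul_apply_nonneg (sub_nonneg.2 hx.2.le))
      (hₑ.mexp_smul_apply_self_pos hx.1.le 1)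
      (h₀.mexp_smul_apply_pos (sub_pos.2 hx.2) (by decide) (by simp [Amat]; positivity))
  rw [(hasDerivAt_trace_Phi τ e x).deriv]
  exact mul_neg_of_neg_of_pos (neg_neg_of_pos (by positivity)) hentry

end Model

theorem specRad_Phi_anti_in_p_general (β γ k T₀ N τ : ℝ) (hβ : 0 < β) (hk : 0 < k)
    (hT₀ : 0 < T₀) (hN : 0 < N)
    (e p p' : ℝ) (he0 : 0 < e) (he1 : e ≤ 1) (hp0 : 0 ≤ p) (hpp' : p < p') (hp'τ : p' ≤ τ) :
    specRad (Phi β γ k T₀ N τ e p') < specRad (Phi β γ k T₀ N τ e p) := by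
  have h₀ := Amat_isMetzler (γ := γ) hβ.le hk.le hT₀.le hN.le zero_le_one
  have hₑ := Amat_isMetzler (γ := γ) hβ.le hk.le hT₀.le hN.le he1
  have hp'0 : 0 ≤ p' := hp0.trans hpp'.le
  have hpτ : p ≤ τ := hpp'.le.trans hp'τ
  exact specRad_lt_specRad_of_trace_lt (Phi_apply_nonneg h₀ hₑ hp0 hpτ)
    (Phi_apply_nonneg h₀ hₑ hp'0 hp'τ) (det_Phi_eq τ e p' p)
    (strictAntiOn_trace_Phi hβ hk hT₀ hN he0 he1 ⟨hp0, hpτ⟩ ⟨hp'0, hp'τ⟩ hpp')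

/-- Monotonicity of the spectral radius of `Φ(e,p)` in the duration `p`. -/
theorem specRad_Phi_anti_in_p (β γ k T₀ N τ : ℝ) (hβ : 0 < β) (hγ : 0 < γ) (hk : 0 < k)
    (hT₀ : 0 < T₀) (hN : 0 < N) (hτ : 0 < τ)
    (e p p' : ℝ) (he0 : 0 < e) (he1 : e ≤ 1) (hp0 : 0 ≤ p) (hpp' : p < p') (hp'τ : p' ≤ τ) :
    specRad (Phi β γ k T₀ N τ e p') < specRad (Phi β γ k T₀ N τ e p) :=
  specRad_Phi_anti_in_p_general β γ k T₀ N τ hβ hk hT₀ hN e p p' he0 he1 hp0 hpp' hp'τ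
end

section
/- Let 0 = p₀ < p₁ < ⋯ < p_m < p_{m+1} = τ and efficiencies 1 ≥ e₁ > e₂ > ⋯ > e_{m+1} ≥ 0. Define Φ(E,P) = e^{(p_{m+1}-p_m)A(e_{m+1})} ⋯ e^{(p₁-p₀)A(e₁)} with A(e) = [[-β, k(1-e)T₀],[Nβ, -γ]]. If for some index i ∈ {1,…,m+1} the value e_i is replaced by e_i' with e_{i+1} < e_i < e_i' < e_{i-1} (conventions e₀ = 1, e_{m+2} = 0, with non-strict inequality allowed at the endpoints), then the spectral radius strictly decreases: ρ(Φ(Ẽ_i, P)) < ρ(Φ(E,P)). -/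
open Matrix

/-- The monodromy matrix for a general piecewise-constant periodic efficiency:
`Φ(E,P) = e^{(p_{m+1}-p_m)A(e_{m+1})} ⋯ e^{(p₁-p₀)A(e₁)}`, where the efficiency takes the
value `e i` on the interval `[p i.castSucc, p i.succ)`. -/
noncomputable def PhiPC (β γ k T₀ N : ℝ) (m : ℕ) (e : Fin (m + 1) → ℝ)
    (p : Fin (m + 2) → ℝ) : Matrix (Fin 2) (Fin 2) ℝ :=
  (((List.finRange (m + 1)).map fun i =>
      mexp ((p i.succ - p i.castSucc) • Amat β γ k T₀ N (e i))).reverse).prod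

/-!
With `c = max β γ`, the matrix `Δ (A(e) + c I)` is entrywise nonnegative, so the power series of
`exp(Δ A(e)) = e^{-Δc} exp(Δ (A(e) + c I))` shows that every factor of `Φ` is entrywise
nonnegative with positive diagonal and positive `(1,0)` entry, and that it is entrywise antitone
in `e`, strictly in the `(0,1)` entry. Writing `Φ = D X_i T`, raising `e_i` thus lowers `Φ`
entrywise, strictly in the `(0,1)` entry, while `Φ 1 0 > 0`. For a nonnegative `2 × 2` matrix
the spectral radius is the larger root `r` of `(r - a)(r - d) = bc`, and this root strictly
decreases under such a perturbation.
-/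

open scoped Nat

namespace List

lemma prod_reverse_set {M : Type*} [Monoid M] {l : List M} {n : ℕ} (h : n < l.length) (a : M) :
    (l.set n a).reverse.prod = (l.drop (n + 1)).reverse.prod * a * (l.take n).reverse.prod := by
  rw [set_eq_take_append_cons_drop, if_pos h]
  simp [mul_assoc]

lemma prod_reverse_map_update_finRange {M : Type*} [Monoid M] {n : ℕ} (f : Fin n → M)
    (i : Fin n) (a : M) :
    ((finRange n).map (Function.update f i a)).reverse.prod =
      (((finRange n).map f).drop (i + 1)).reverse.prod * a *
        (((finRange n).map f).take i).reverse.prod := by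
  rw [(nodup_finRange n).map_update, if_pos (mem_finRange i), idxOf_finRange,
    prod_reverse_set (by simp)]

end List

namespace Matrix

def NonnegPosDiag {ι : Type*} (M : Matrix ι ι ℝ) : Prop :=
  (∀ i j, 0 ≤ M i j) ∧ ∀ i, 0 < M i i

lemma nonnegPosDiag_one {ι : Type*} [DecidableEq ι] : (1 : Matrix ι ι ℝ).NonnegPosDiag :=
  ⟨fun i j => by by_cases h : i = j <;> simp [one_apply, h], fun i => by simp⟩

section

variable {ι : Type*} [Fintype ι] {A A' B B' C : Matrix ι ι ℝ}

lemma mul_apply_nonneg_s12 (hA : ∀ i j, 0 ≤ A i j) (hB : ∀ i j, 0 ≤ B i j) (i j : ι) :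
    0 ≤ (A * B) i j :=
  Finset.sum_nonneg fun k _ => mul_nonneg (hA i k) (hB k j)

lemma mul_apply_le_mul_apply (hA' : ∀ i j, 0 ≤ A' i j) (hB' : ∀ i j, 0 ≤ B' i j)
    (hA : ∀ i j, A' i j ≤ A i j) (hB : ∀ i j, B' i j ≤ B i j) (i j : ι) :
    (A' * B') i j ≤ (A * B) i j :=
  Finset.sum_le_sum fun k _ => mul_le_mul (hA i k) (hB k j) (hB' k j) ((hA' i k).trans (hA i k))

lemma apply_mul_apply_le_mul_apply (hA : ∀ i j, 0 ≤ A i j) (hB : ∀ i j, 0 ≤ B i j)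
    (i k j : ι) : A i k * B k j ≤ (A * B) i j :=
  Finset.single_le_sum (f := fun l => A i l * B l j) (fun l _ => mul_nonneg (hA i l) (hB l j))
    (Finset.mem_univ k)

lemma apply_mul_apply_mul_apply_le_mul_mul_apply (hA : ∀ i j, 0 ≤ A i j)
    (hB : ∀ i j, 0 ≤ B i j) (hC : ∀ i j, 0 ≤ C i j) (i k l j : ι) :
    A i k * B k l * C l j ≤ (A * B * C) i j :=
  (mul_le_mul_of_nonneg_right (apply_mul_apply_le_mul_apply hA hB i k l) (hC l j)).trans
    (apply_mul_apply_le_mul_apply (mul_apply_nonneg_s12 hA hB) hC i l j)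

lemma NonnegPosDiag.mul (hA : A.NonnegPosDiag) (hB : B.NonnegPosDiag) :
    (A * B).NonnegPosDiag :=
  ⟨mul_apply_nonneg_s12 hA.1 hB.1, fun i =>
    (mul_pos (hA.2 i) (hB.2 i)).trans_le (apply_mul_apply_le_mul_apply hA.1 hB.1 i i i)⟩

variable [DecidableEq ι]

lemma nonnegPosDiag_list_prod {l : List (Matrix ι ι ℝ)} (hl : ∀ M ∈ l, M.NonnegPosDiag) :
    l.prod.NonnegPosDiag := by
  induction l with
  | nil => exact nonnegPosDiag_one
  | cons M l ih =>
    rw [List.prod_cons]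
    exact (hl M List.mem_cons_self).mul (ih fun M' hM' => hl M' (List.mem_cons_of_mem M hM'))

lemma pow_apply_le_pow_apply_s12 (hA : ∀ i j, 0 ≤ A i j) (hAB : ∀ i j, A i j ≤ B i j) (n : ℕ)
    (i j : ι) : (A ^ n) i j ≤ (B ^ n) i j := by
  induction n generalizing i j with
  | zero => rfl
  | succ n ih =>
    rw [pow_succ, pow_succ]
    exact mul_apply_le_mul_apply (pow_apply_nonneg hA n) hA ih hAB i j

end

end Matrix

section MatrixExponential

variable {n : ℕ} {A B : Matrix (Fin n) (Fin n) ℝ}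

lemma mexp_zero : mexp (0 : Matrix (Fin n) (Fin n) ℝ) = 1 :=
  NormedSpace.exp_zero

lemma hasSum_mexp_apply (A : Matrix (Fin n) (Fin n) ℝ) (i j : Fin n) :
    HasSum (fun k : ℕ => (k ! : ℝ)⁻¹ * (A ^ k) i j) (mexp A i j) := by
  open scoped Matrix.Norms.Operator in
  have h := NormedSpace.exp_series_hasSum_exp' (𝕂 := ℝ) A
  exact Pi.hasSum.1 (Pi.hasSum.1 h i) j

lemma sub_le_mexp_sub_mexp (hA : ∀ i j, 0 ≤ A i j) (hAB : ∀ i j, A i j ≤ B i j) (i j : Fin n) :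
    B i j - A i j ≤ mexp B i j - mexp A i j := by
  have h := (hasSum_mexp_apply B i j).sub (hasSum_mexp_apply A i j)
  have hterm (k : ℕ) : 0 ≤ (k ! : ℝ)⁻¹ * (B ^ k) i j - (k ! : ℝ)⁻¹ * (A ^ k) i j := by
    rw [← mul_sub]
    exact mul_nonneg (by positivity) (sub_nonneg.2 (Matrix.pow_apply_le_pow_apply_s12 hA hAB k i j))
  simpa using sum_le_hasSum {1} (fun k _ => hterm k) h

lemma mexp_add_smul_one (A : Matrix (Fin n) (Fin n) ℝ) (c : ℝ) :
    mexp (A + c • 1) = Real.exp c • mexp A := by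
  have hc : NormedSpace.exp (c • 1 : Matrix (Fin n) (Fin n) ℝ) = Real.exp c • 1 := by
    rw [Matrix.smul_one_eq_diagonal, Matrix.exp_diagonal, Pi.exp_def, Real.exp_eq_exp_ℝ,
      Matrix.smul_one_eq_diagonal]
  rw [mexp, mexp, Matrix.exp_add_of_commute _ _ ((Commute.one_right A).smul_right c), hc,
    mul_smul_comm, mul_one]

lemma sub_le_exp_mul_mexp_sub_mexp {c : ℝ} (hA : ∀ i j, 0 ≤ (A + c • 1) i j)
    (hAB : ∀ i j, A i j ≤ B i j) (i j : Fin n) :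
    B i j - A i j ≤ Real.exp c * (mexp B i j - mexp A i j) := by
  have h := sub_le_mexp_sub_mexp hA (B := B + c • 1) (fun i j => by simpa using hAB i j) i j
  rw [mexp_add_smul_one, mexp_add_smul_one] at h
  simpa [mul_sub] using h

lemma le_exp_mul_mexp_apply {c : ℝ} (hB : ∀ i j, 0 ≤ (B + c • 1) i j) (i j : Fin n) :
    (B + c • 1) i j + (1 : Matrix (Fin n) (Fin n) ℝ) i j ≤ Real.exp c * mexp B i j := by
  have h := sub_le_mexp_sub_mexp (A := 0) (fun _ _ => le_rfl) hB i j
  rw [mexp_add_smul_one, mexp_zero] at h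
  simp only [Matrix.zero_apply, sub_zero, Matrix.smul_apply, smul_eq_mul] at h
  linarith

end MatrixExponential

section Model

variable {β γ k T₀ N Δ e e' : ℝ}

lemma smul_Amat_add_smul_one_apply_nonneg (hβ : 0 ≤ β) (hk : 0 ≤ k) (hT₀ : 0 ≤ T₀)
    (hN : 0 ≤ N) (hΔ : 0 ≤ Δ) (he : e ≤ 1) (i j : Fin 2) :
    0 ≤ (Δ • Amat β γ k T₀ N e + (Δ * max β γ) • 1) i j := by
  have hkT : 0 ≤ k * (1 - e) * T₀ := by have := sub_nonneg.2 he; positivity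
  fin_cases i <;> fin_cases j <;> simp [Amat] <;>
    nlinarith [le_max_left β γ, le_max_right β γ, mul_nonneg hΔ hkT,
      mul_nonneg hΔ (mul_nonneg hN hβ)]

lemma smul_Amat_apply_le (hk : 0 ≤ k) (hT₀ : 0 ≤ T₀) (hΔ : 0 ≤ Δ) (he : e ≤ e') (i j : Fin 2) :
    (Δ • Amat β γ k T₀ N e') i j ≤ (Δ • Amat β γ k T₀ N e) i j := by
  have : k * (1 - e') * T₀ ≤ k * (1 - e) * T₀ := by gcongr
  fin_cases i <;> fin_cases j <;> simp [Amat]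
  exact mul_le_mul_of_nonneg_left this hΔ

lemma smul_Amat_zero_one_lt (hk : 0 < k) (hT₀ : 0 < T₀) (hΔ : 0 < Δ) (he : e < e') :
    (Δ • Amat β γ k T₀ N e') 0 1 < (Δ • Amat β γ k T₀ N e) 0 1 := by
  have : k * (1 - e') * T₀ < k * (1 - e) * T₀ := by gcongr
  simpa [Amat] using mul_lt_mul_of_pos_left this hΔ

lemma nonnegPosDiag_mexp_smul_Amat (hβ : 0 ≤ β) (hk : 0 ≤ k) (hT₀ : 0 ≤ T₀) (hN : 0 ≤ N)
    (hΔ : 0 ≤ Δ) (he : e ≤ 1) : (mexp (Δ • Amat β γ k T₀ N e)).NonnegPosDiag := by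
  have hB := smul_Amat_add_smul_one_apply_nonneg (γ := γ) hβ hk hT₀ hN hΔ he
  have hlow := le_exp_mul_mexp_apply hB
  have hexp := Real.exp_pos (Δ * max β γ)
  refine ⟨fun i j => ?_, fun i => ?_⟩
  · exact (mul_nonneg_iff_of_pos_left hexp).1
      ((add_nonneg (hB i j) (Matrix.nonnegPosDiag_one.1 i j)).trans (hlow i j))
  · exact (mul_pos_iff_of_pos_left hexp).1
      ((add_pos_of_nonneg_of_pos (hB i i) (Matrix.nonnegPosDiag_one.2 i)).trans_le (hlow i i))

lemma mexp_smul_Amat_one_zero_pos (hβ : 0 < β) (hk : 0 ≤ k) (hT₀ : 0 ≤ T₀) (hN : 0 < N)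
    (hΔ : 0 < Δ) (he : e ≤ 1) : 0 < mexp (Δ • Amat β γ k T₀ N e) 1 0 := by
  have h := le_exp_mul_mexp_apply
    (smul_Amat_add_smul_one_apply_nonneg (γ := γ) hβ.le hk hT₀ hN.le hΔ.le he) 1 0
  have h10 : (Δ • Amat β γ k T₀ N e + (Δ * max β γ) • 1) 1 0 = Δ * (N * β) := by simp [Amat]
  rw [h10, Matrix.one_apply_ne (by decide), add_zero] at h
  exact (mul_pos_iff_of_pos_left (Real.exp_pos _)).1 ((by positivity : 0 < Δ * (N * β)).trans_le h)

lemma mexp_smul_Amat_apply_le (hβ : 0 ≤ β) (hk : 0 ≤ k) (hT₀ : 0 ≤ T₀) (hN : 0 ≤ N)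
    (hΔ : 0 ≤ Δ) (he : e ≤ e') (he' : e' ≤ 1) (i j : Fin 2) :
    mexp (Δ • Amat β γ k T₀ N e') i j ≤ mexp (Δ • Amat β γ k T₀ N e) i j := by
  have h := sub_le_exp_mul_mexp_sub_mexp
    (smul_Amat_add_smul_one_apply_nonneg (γ := γ) hβ hk hT₀ hN hΔ he')
    (smul_Amat_apply_le hk hT₀ hΔ he) i j
  have := smul_Amat_apply_le (β := β) (γ := γ) (N := N) hk hT₀ hΔ he i j
  exact sub_nonneg.1 ((mul_nonneg_iff_of_pos_left (Real.exp_pos _)).1 ((sub_nonneg.2 this).trans h))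

lemma mexp_smul_Amat_zero_one_lt (hβ : 0 ≤ β) (hk : 0 < k) (hT₀ : 0 < T₀) (hN : 0 ≤ N)
    (hΔ : 0 < Δ) (he : e < e') (he' : e' ≤ 1) :
    mexp (Δ • Amat β γ k T₀ N e') 0 1 < mexp (Δ • Amat β γ k T₀ N e) 0 1 := by
  have h := sub_le_exp_mul_mexp_sub_mexp
    (smul_Amat_add_smul_one_apply_nonneg (γ := γ) hβ hk.le hT₀.le hN hΔ.le he')
    (smul_Amat_apply_le hk.le hT₀.le hΔ.le he.le) 0 1
  have := smul_Amat_zero_one_lt (β := β) (γ := γ) (N := N) hk hT₀ hΔ he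
  exact sub_pos.1 ((mul_pos_iff_of_pos_left (Real.exp_pos _)).1 ((sub_pos.2 this).trans_le h))

end Model

section PerronRoot

variable {M M' : Matrix (Fin 2) (Fin 2) ℝ}

/-- The larger eigenvalue of `M`, provided `0 ≤ M 0 1 * M 1 0`. -/
noncomputable def perronRoot (M : Matrix (Fin 2) (Fin 2) ℝ) : ℝ :=
  (M 0 0 + M 1 1 + √((M 0 0 - M 1 1) ^ 2 + 4 * (M 0 1 * M 1 0))) / 2

lemma perronRoot_sub_mul_sub (h : 0 ≤ M 0 1 * M 1 0) :
    (perronRoot M - M 0 0) * (perronRoot M - M 1 1) = M 0 1 * M 1 0 := by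
  have hs := Real.sq_sqrt (by positivity : 0 ≤ (M 0 0 - M 1 1) ^ 2 + 4 * (M 0 1 * M 1 0))
  unfold perronRoot
  linear_combination hs / 4

lemma abs_sub_le_two_mul_perronRoot_sub (h : 0 ≤ M 0 1 * M 1 0) :
    |M 0 0 - M 1 1| ≤ 2 * perronRoot M - (M 0 0 + M 1 1) := by
  have : |M 0 0 - M 1 1| ≤ √((M 0 0 - M 1 1) ^ 2 + 4 * (M 0 1 * M 1 0)) :=
    Real.abs_le_sqrt (le_add_of_nonneg_right (by linarith))
  unfold perronRoot
  linarith

lemma apply_zero_zero_le_perronRoot (h : 0 ≤ M 0 1 * M 1 0) : M 0 0 ≤ perronRoot M := by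
  linarith [le_abs_self (M 0 0 - M 1 1), abs_sub_le_two_mul_perronRoot_sub h]

lemma apply_one_one_le_perronRoot (h : 0 ≤ M 0 1 * M 1 0) : M 1 1 ≤ perronRoot M := by
  linarith [neg_abs_le (M 0 0 - M 1 1), abs_sub_le_two_mul_perronRoot_sub h]

lemma perronRoot_lt_perronRoot (hM' : ∀ i j, 0 ≤ M' i j) (hle : ∀ i j, M' i j ≤ M i j)
    (h01 : M' 0 1 < M 0 1) (h10 : 0 < M 1 0) : perronRoot M' < perronRoot M := by
  have hbc' : 0 ≤ M' 0 1 * M' 1 0 := mul_nonneg (hM' 0 1) (hM' 1 0)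
  have hbc : M' 0 1 * M' 1 0 < M 0 1 * M 1 0 :=
    (mul_le_mul_of_nonneg_left (hle 1 0) (hM' 0 1)).trans_lt (mul_lt_mul_of_pos_right h01 h10)
  have hbc0 : 0 ≤ M 0 1 * M 1 0 := hbc'.trans hbc.le
  by_contra! hroot
  -- Then `b c = (r - a) (r - d) ≤ (r' - a') (r' - d') = b' c'`, as `max a d ≤ r ≤ r'`.
  have hmono : (perronRoot M - M 0 0) * (perronRoot M - M 1 1) ≤
      (perronRoot M' - M' 0 0) * (perronRoot M' - M' 1 1) :=
    mul_le_mul (by linarith [hle 0 0]) (by linarith [hle 1 1])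
      (sub_nonneg.2 (apply_one_one_le_perronRoot hbc0))
      (by linarith [hle 0 0, apply_zero_zero_le_perronRoot hbc0])
  rw [perronRoot_sub_mul_sub hbc', perronRoot_sub_mul_sub hbc0] at hmono
  linarith

lemma spectrum_map_ofReal_eq (h : 0 ≤ M 0 1 * M 1 0) :
    spectrum ℂ (M.map Complex.ofReal) =
      {(perronRoot M : ℂ), ((M 0 0 + M 1 1 - perronRoot M : ℝ) : ℂ)} := by
  have hr : ((perronRoot M : ℂ) - M 0 0) * (perronRoot M - M 1 1) = M 0 1 * M 1 0 := by
    exact_mod_cast perronRoot_sub_mul_sub h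
  ext z
  have hfactor : z ^ 2 - (M 0 0 + M 1 1 : ℂ) * z + (M 0 0 * M 1 1 - M 0 1 * M 1 0 : ℂ) =
      (z - perronRoot M) * (z - (M 0 0 + M 1 1 - perronRoot M)) := by
    linear_combination hr
  simp [Matrix.mem_spectrum_iff_isRoot_charpoly, Matrix.charpoly_fin_two, Matrix.trace_fin_two,
    Matrix.det_fin_two, hfactor, sub_eq_zero]

lemma specRad_eq_perronRoot (hM : ∀ i j, 0 ≤ M i j) :
    specRad M = ENNReal.ofReal (perronRoot M) := by
  have h := mul_nonneg (hM 0 1) (hM 1 0)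
  have hr := abs_sub_le_two_mul_perronRoot_sub h
  have hpos : 0 ≤ perronRoot M := (hM 0 0).trans (apply_zero_zero_le_perronRoot h)
  rw [specRad, spectralRadius, spectrum_map_ofReal_eq h, iSup_insert, iSup_singleton,
    Complex.nnnorm_real, Complex.nnnorm_real, sup_eq_left.2, ← enorm_eq_nnnorm,
    Real.enorm_eq_ofReal hpos]
  rw [ENNReal.coe_le_coe, ← NNReal.coe_le_coe, coe_nnnorm, coe_nnnorm, Real.norm_of_nonneg hpos,
    Real.norm_eq_abs, abs_le]
  constructor <;> linarith [hM 0 0, hM 1 1, abs_nonneg (M 0 0 - M 1 1)]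

end PerronRoot

lemma specRad_mul_mul_lt {D X X' T : Matrix (Fin 2) (Fin 2) ℝ} (hD : D.NonnegPosDiag)
    (hT : T.NonnegPosDiag) (hX' : ∀ i j, 0 ≤ X' i j) (hX'X : ∀ i j, X' i j ≤ X i j)
    (h01 : X' 0 1 < X 0 1) (h10 : 0 < X 1 0) :
    specRad (D * X' * T) < specRad (D * X * T) := by
  have hX : ∀ i j, 0 ≤ X i j := fun i j => (hX' i j).trans (hX'X i j)
  have hsub : ∀ i j, 0 ≤ (X - X') i j := fun i j => sub_nonneg.2 (hX'X i j)
  have hdiff (i j : Fin 2) : (D * X * T) i j - (D * X' * T) i j = (D * (X - X') * T) i j := by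
    rw [mul_sub, sub_mul, Matrix.sub_apply]
  have hP' := Matrix.mul_apply_nonneg_s12 (Matrix.mul_apply_nonneg_s12 hD.1 hX') hT.1
  have hle (i j : Fin 2) : (D * X' * T) i j ≤ (D * X * T) i j := by
    rw [← sub_nonneg, hdiff]
    exact Matrix.mul_apply_nonneg_s12 (Matrix.mul_apply_nonneg_s12 hD.1 hsub) hT.1 i j
  have hlt01 : (D * X' * T) 0 1 < (D * X * T) 0 1 := by
    rw [← sub_pos, hdiff]
    exact (mul_pos (mul_pos (hD.2 0) (sub_pos.2 h01)) (hT.2 1)).trans_le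
      (Matrix.apply_mul_apply_mul_apply_le_mul_mul_apply hD.1 hsub hT.1 0 0 1 1)
  have hpos10 : 0 < (D * X * T) 1 0 :=
    (mul_pos (mul_pos (hD.2 1) h10) (hT.2 0)).trans_le
      (Matrix.apply_mul_apply_mul_apply_le_mul_mul_apply hD.1 hX hT.1 1 1 0 0)
  rw [specRad_eq_perronRoot hP', specRad_eq_perronRoot (fun i j => (hP' i j).trans (hle i j)),
    ENNReal.ofReal_lt_ofReal_iff_of_nonneg ((hP' 0 0).trans
      (apply_zero_zero_le_perronRoot (mul_nonneg (hP' 0 1) (hP' 1 0))))]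
  exact perronRoot_lt_perronRoot hP' hle hlt01 hpos10

section Monodromy

variable (β γ k T₀ N : ℝ) {m : ℕ} (e : Fin (m + 1) → ℝ) (p : Fin (m + 2) → ℝ)

noncomputable def phiPCFactors : List (Matrix (Fin 2) (Fin 2) ℝ) :=
  (List.finRange (m + 1)).map fun j => mexp ((p j.succ - p j.castSucc) • Amat β γ k T₀ N (e j))

lemma PhiPC_update (i : Fin (m + 1)) (x : ℝ) :
    PhiPC β γ k T₀ N m (Function.update e i x) p =
      ((phiPCFactors β γ k T₀ N e p).drop (i + 1)).reverse.prod *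
        mexp ((p i.succ - p i.castSucc) • Amat β γ k T₀ N x) *
        ((phiPCFactors β γ k T₀ N e p).take i).reverse.prod := by
  rw [phiPCFactors, ← List.prod_reverse_map_update_finRange, PhiPC]
  congr 3
  funext j
  exact Function.apply_update (fun j x => mexp ((p j.succ - p j.castSucc) • Amat β γ k T₀ N x))
    e i x j

variable {β γ k T₀ N e p}

lemma nonnegPosDiag_of_mem_phiPCFactors (hβ : 0 ≤ β) (hk : 0 ≤ k) (hT₀ : 0 ≤ T₀) (hN : 0 ≤ N)
    (hp : Monotone p) (he : ∀ j, e j ≤ 1) {M : Matrix (Fin 2) (Fin 2) ℝ}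
    (hM : M ∈ phiPCFactors β γ k T₀ N e p) : M.NonnegPosDiag := by
  obtain ⟨j, -, rfl⟩ := List.mem_map.1 hM
  exact nonnegPosDiag_mexp_smul_Amat hβ hk hT₀ hN
    (sub_nonneg.2 (hp j.castSucc_lt_succ.le)) (he j)

end Monodromy

theorem specRad_PhiPC_anti_in_e_general (β γ k T₀ N : ℝ) (hβ : 0 < β) (hk : 0 < k)
    (hT₀ : 0 < T₀) (hN : 0 < N) (m : ℕ)
    (e : Fin (m + 1) → ℝ) (p : Fin (m + 2) → ℝ)
    (hpmono : StrictMono p)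
    (he1 : e 0 ≤ 1) (heanti : StrictAnti e)
    (i : Fin (m + 1)) (e' : ℝ) (hlt : e i < e')
    (hub0 : (i : ℕ) = 0 → e' ≤ 1)
    (hub : ∀ j : Fin (m + 1), (j : ℕ) + 1 = (i : ℕ) → e' < e j) :
    specRad (PhiPC β γ k T₀ N m (Function.update e i e') p) <
      specRad (PhiPC β γ k T₀ N m e p) := by
  have he_le (j : Fin (m + 1)) : e j ≤ 1 := (heanti.antitone (Fin.zero_le j)).trans he1
  have he'_le : e' ≤ 1 := by
    rcases Nat.eq_zero_or_pos i with hi | hi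
    · exact hub0 hi
    · exact (hub ⟨i - 1, by omega⟩ (by simp; omega)).le.trans (he_le _)
  have hΔ : 0 < p i.succ - p i.castSucc := sub_pos.2 (hpmono i.castSucc_lt_succ)
  have hfactors := fun M (hM : M ∈ phiPCFactors β γ k T₀ N e p) =>
    nonnegPosDiag_of_mem_phiPCFactors hβ.le hk.le hT₀.le hN.le hpmono.monotone he_le hM
  have hPhi := PhiPC_update β γ k T₀ N e p i (e i)
  rw [Function.update_eq_self] at hPhi
  rw [hPhi, PhiPC_update]
  exact specRad_mul_mul_lt
    (Matrix.nonnegPosDiag_list_prod fun M hM =>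
      hfactors M (List.mem_of_mem_drop (List.mem_reverse.1 hM)))
    (Matrix.nonnegPosDiag_list_prod fun M hM =>
      hfactors M (List.mem_of_mem_take (List.mem_reverse.1 hM)))
    (nonnegPosDiag_mexp_smul_Amat hβ.le hk.le hT₀.le hN.le hΔ.le he'_le).1
    (mexp_smul_Amat_apply_le hβ.le hk.le hT₀.le hN.le hΔ.le hlt.le he'_le)
    (mexp_smul_Amat_zero_one_lt hβ.le hk hT₀ hN.le hΔ hlt he'_le)
    (mexp_smul_Amat_one_zero_pos hβ hk.le hT₀.le hN hΔ (he_le i))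

/-- Increasing one of the efficiencies `e_i` (within the admissible range) strictly decreases
the spectral radius of `Φ(E,P)`. -/
theorem specRad_PhiPC_anti_in_e (β γ k T₀ N τ : ℝ) (hβ : 0 < β) (hγ : 0 < γ) (hk : 0 < k)
    (hT₀ : 0 < T₀) (hN : 0 < N) (hτ : 0 < τ) (m : ℕ) (hm : 1 ≤ m)
    (e : Fin (m + 1) → ℝ) (p : Fin (m + 2) → ℝ)
    (hp0 : p 0 = 0) (hpτ : p (Fin.last (m + 1)) = τ) (hpmono : StrictMono p)
    (he1 : e 0 ≤ 1) (heN : 0 ≤ e (Fin.last m)) (heanti : StrictAnti e)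
    (i : Fin (m + 1)) (e' : ℝ) (hlt : e i < e')
    (hub0 : (i : ℕ) = 0 → e' ≤ 1)
    (hub : ∀ j : Fin (m + 1), (j : ℕ) + 1 = (i : ℕ) → e' < e j) :
    specRad (PhiPC β γ k T₀ N m (Function.update e i e') p) <
      specRad (PhiPC β γ k T₀ N m e p) :=
  specRad_PhiPC_anti_in_e_general β γ k T₀ N hβ hk hT₀ hN m e p hpmono he1 heanti i e' hlt hub0 hub
end
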